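/- arXiv:2006.14415 — 4 statements merged into one kernel-verified Lean document; each statement's English description precedes it below -/
import Mathlib

section
/- Let λ and μ be partitions of the same positive integer n, and suppose μ is dominated by λ (for every m, the sum of the m largest parts of μ is at most the sum of the m largest parts of λ). Then there exists at least one semistandard Young tableau of shape λ and content μ, i.e., a semistandard Young tableau of shape λ in which the entry i occurs exactly μ_i times for each i (where μ₁ ≥ μ₂ ≥ … are the parts of μ). Consequently, when the Schur function s_λ is expanded in the monomial symmetric function basis, the coefficient of m_μ is positive. -/
/-- `mu` is dominated by `lam`: for every `m`, the sum of the `m` largest parts of `mu`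
is at most the sum of the `m` largest parts of `lam`. -/
def DominatedBy {n : ℕ} (mu lam : Nat.Partition n) : Prop :=
  ∀ m : ℕ, ((mu.parts.sort (· ≥ ·)).take m).sum ≤ ((lam.parts.sort (· ≥ ·)).take m).sum

/-- The Young diagram whose rows are the parts of `lam` in weakly decreasing order. -/
def Nat.Partition.toYoungDiagram {n : ℕ} (lam : Nat.Partition n) : YoungDiagram :=
  YoungDiagram.ofRowLens (lam.parts.sort (· ≥ ·)) (List.Pairwise.sortedGE (lam.parts.pairwise_sort _))

/-!
Induction on the number of parts of `μ = (μ₀ ≥ ⋯ ≥ μₖ)`. Remove from `λ` the horizontal strip of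
`μₖ` cells lying as low as possible. The first `t` rows then lose only `μₖ - min μₖ λₜ` cells, and
`μ₀ + ⋯ + μₜ₋₁ + μₖ` is at most both `λ₀ + ⋯ + λₜ₋₁ + μₖ` and `λ₀ + ⋯ + λₜ`, so the smaller shape
still dominates `(μ₀, …, μₖ₋₁)`. Fill it recursively with entries `< k` and the strip with `k`:
a horizontal strip of largest entries keeps rows weak and columns strict. Since tableaux of a
fixed content have bounded entries, there are finitely many, so existence gives a positive count.
-/

open YoungDiagram

namespace List

theorem SortedGE.getD_le_getD {L : List ℕ} (hL : L.SortedGE) {i j : ℕ} (hij : i ≤ j) :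
    L.getD j 0 ≤ L.getD i 0 := by
  rcases lt_or_ge j L.length with hj | hj
  · rw [getD_eq_getElem _ _ hj, getD_eq_getElem _ _ (hij.trans_lt hj)]
    exact hL.getElem_ge_getElem_of_le hij
  · rw [getD_eq_default _ _ hj]
    exact Nat.zero_le _

theorem sum_take_add_one_getD (L : List ℕ) (t : ℕ) :
    (L.take (t + 1)).sum = (L.take t).sum + L.getD t 0 := by
  simp only [take_add_one, sum_append, getD_eq_getElem?_getD]
  cases L[t]? <;> simp

theorem sum_take_add_le_sum_take_append {M : List ℕ} {m : ℕ} (hM : (M ++ [m]).SortedGE) (t : ℕ) :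
    (M.take t).sum + m ≤ ((M ++ [m]).take (t + 1)).sum := by
  rcases lt_or_ge t M.length with ht | ht
  · have hm := hM.getD_le_getD ht.le
    rw [getD_append _ _ _ _ ht, getD_append_right _ _ _ _ le_rfl, Nat.sub_self,
      getD_cons_zero] at hm
    rw [take_append_of_le_length ht, sum_take_add_one_getD]
    omega
  · rw [take_of_length_le ht, take_of_length_le (by simp; omega), sum_append, sum_singleton]

end List

namespace YoungDiagram

theorem card_cellsOfRowLens (L : List ℕ) : (YoungDiagram.cellsOfRowLens L).card = L.sum := by
  induction L with
  | nil => rfl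
  | cons a L ih =>
    rw [YoungDiagram.cellsOfRowLens, Finset.card_union_of_disjoint, Finset.card_product,
      Finset.card_map, ih, Finset.card_singleton, Finset.card_range, one_mul, List.sum_cons]
    refine Finset.disjoint_left.2 fun c h h' => ?_
    obtain ⟨c', -, rfl⟩ := Finset.mem_map.1 h'
    exact Nat.succ_ne_zero _ (Finset.mem_singleton.1 (Finset.mem_product.1 h).1)

theorem card_ofRowLens (L : List ℕ) (hL : L.SortedGE) : (ofRowLens L hL).card = L.sum :=
  card_cellsOfRowLens L

theorem mem_ofRowLens_iff_lt_getD {L : List ℕ} {hL : L.SortedGE} {c : ℕ × ℕ} :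
    c ∈ ofRowLens L hL ↔ c.2 < L.getD c.1 0 := by
  rw [mem_ofRowLens]
  rcases lt_or_ge c.1 L.length with h | h
  · simp [h]
  · simp [h.not_gt]

/-- The skew shape `μ / ν` has at most one cell in each column. -/
def IsHorizontalStrip (ν μ : YoungDiagram) : Prop :=
  ν ≤ μ ∧ ∀ {i j : ℕ}, (i + 1, j) ∈ μ → (i, j) ∈ ν

end YoungDiagram

namespace SemistandardYoungTableau

variable {μ ν : YoungDiagram}

def content (T : SemistandardYoungTableau μ) (i : ℕ) : ℕ :=
  (μ.cells.filter fun c => T c.1 c.2 = i).card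

theorem content_pos_of_mem (T : SemistandardYoungTableau μ) {i j : ℕ} (h : (i, j) ∈ μ) :
    0 < T.content (T i j) :=
  Finset.card_pos.2 ⟨(i, j), Finset.mem_filter.2 ⟨(mem_cells _).2 h, rfl⟩⟩

theorem lt_length_of_content_eq_getD {T : SemistandardYoungTableau μ} {M : List ℕ}
    (hT : ∀ i, T.content i = M.getD i 0) {i j : ℕ} (h : (i, j) ∈ μ) : T i j < M.length := by
  by_contra! hle
  have := T.content_pos_of_mem h
  rw [hT, List.getD_eq_default _ _ hle] at this
  exact this.false

theorem finite_content_eq_getD (μ : YoungDiagram) (M : List ℕ) :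
    Finite {T : SemistandardYoungTableau μ // ∀ i, T.content i = M.getD i 0} := by
  refine Finite.of_injective (β := μ.cells → Fin M.length)
    (fun T c => ⟨T.1 c.1.1 c.1.2, lt_length_of_content_eq_getD T.2 ((mem_cells _).1 c.2)⟩) ?_
  intro T T' h
  refine Subtype.ext (ext fun i j => ?_)
  by_cases hij : (i, j) ∈ μ
  · simpa using congrFun h ⟨(i, j), (mem_cells _).2 hij⟩
  · rw [T.1.zeros hij, T'.1.zeros hij]

def extendStrip (T : SemistandardYoungTableau ν) (hνμ : IsHorizontalStrip ν μ) (k : ℕ)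
    (hT : ∀ {i j : ℕ}, (i, j) ∈ ν → T i j < k) : SemistandardYoungTableau μ where
  entry i j := if (i, j) ∈ ν then T i j else if (i, j) ∈ μ then k else 0
  row_weak' {i j₁ j₂} hj h₂ := by
    have h₁ : (i, j₁) ∈ μ := μ.up_left_mem le_rfl hj.le h₂
    by_cases hν₂ : (i, j₂) ∈ ν
    · have hν₁ : (i, j₁) ∈ ν := ν.up_left_mem le_rfl hj.le hν₂
      simpa [hν₁, hν₂] using T.row_weak hj hν₂
    · by_cases hν₁ : (i, j₁) ∈ ν
      · simpa [hν₁, hν₂, h₂] using (hT hν₁).le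
      · simp [hν₁, hν₂, h₁, h₂]
  col_strict' {i₁ i₂ j} hi h₂ := by
    have hν₁ : (i₁, j) ∈ ν := hνμ.2 (μ.up_left_mem hi le_rfl h₂)
    by_cases hν₂ : (i₂, j) ∈ ν
    · simpa [hν₁, hν₂] using T.col_strict hi hν₂
    · simpa [hν₁, hν₂, h₂] using hT hν₁
  zeros' {i j} h := by
    simp [h, show (i, j) ∉ ν from fun hν => h (hνμ.1 hν)]

variable {T : SemistandardYoungTableau ν} {hνμ : IsHorizontalStrip ν μ} {k : ℕ}
  {hT : ∀ {i j : ℕ}, (i, j) ∈ ν → T i j < k}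

theorem extendStrip_apply (i j : ℕ) : T.extendStrip hνμ k hT i j =
    if (i, j) ∈ ν then T i j else if (i, j) ∈ μ then k else 0 :=
  rfl

theorem content_extendStrip_of_lt {i : ℕ} (hi : i < k) :
    (T.extendStrip hνμ k hT).content i = T.content i := by
  unfold content
  congr 1
  ext ⟨a, b⟩
  by_cases hν : (a, b) ∈ ν
  · simp [extendStrip_apply, hν, hνμ.1 hν]
  · by_cases hμ : (a, b) ∈ μ <;> simp [extendStrip_apply, hν, hμ, hi.ne']

theorem content_extendStrip_self :
    (T.extendStrip hνμ k hT).content k = μ.card - ν.card := by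
  rw [← Finset.card_sdiff_of_subset (fun c hc => (mem_cells c).2 (hνμ.1 ((mem_cells c).1 hc)))]
  unfold content
  congr 1
  ext ⟨a, b⟩
  by_cases hν : (a, b) ∈ ν
  · simp [extendStrip_apply, hν, (hT hν).ne]
  · by_cases hμ : (a, b) ∈ μ <;> simp [extendStrip_apply, hν, hμ]

theorem content_extendStrip_of_gt {i : ℕ} (hi : k < i) :
    (T.extendStrip hνμ k hT).content i = 0 := by
  refine Finset.card_eq_zero.2 (Finset.filter_eq_empty_iff.2 fun ⟨a, b⟩ hμ => ?_)
  by_cases hν : (a, b) ∈ ν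
  · simpa [extendStrip_apply, hν] using ((hT hν).trans hi).ne
  · simp [extendStrip_apply, hν, (mem_cells _).1 hμ, hi.ne]

end SemistandardYoungTableau

/-- Removes from the shape with row lengths `L` the horizontal strip of `m` cells lying as low as
possible: rows `t, t + 1, …` lose `min m L[t]` cells together (see `sum_take_removeStrip`), the
most a horizontal strip can take from them. -/
def removeStrip (m : ℕ) : List ℕ → List ℕ
  | [] => []
  | a :: L => (a - m + min m (L.getD 0 0)) :: removeStrip m L

theorem getD_removeStrip (m : ℕ) (L : List ℕ) (i : ℕ) :
    (removeStrip m L).getD i 0 = L.getD i 0 - m + min m (L.getD (i + 1) 0) := by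
  induction L generalizing i with
  | nil => simp [removeStrip]
  | cons a L ih => cases i <;> simp only [removeStrip, List.getD_cons_zero, List.getD_cons_succ, ih]

theorem sum_take_removeStrip (m : ℕ) (L : List ℕ) (t : ℕ) :
    ((removeStrip m L).take t).sum + min m (L.getD 0 0) = (L.take t).sum + min m (L.getD t 0) := by
  induction L generalizing t with
  | nil => simp [removeStrip]
  | cons a L ih =>
    cases t with
    | zero => simp
    | succ t =>
      have := ih t
      simp only [removeStrip, List.take_succ_cons, List.sum_cons, List.getD_cons_zero,
        List.getD_cons_succ] at *
      omega

@[simp]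
theorem length_removeStrip (m : ℕ) (L : List ℕ) : (removeStrip m L).length = L.length := by
  induction L with
  | nil => rfl
  | cons a L ih => simp [removeStrip, ih]

theorem sum_removeStrip {m : ℕ} {L : List ℕ} (hm : m ≤ L.getD 0 0) :
    (removeStrip m L).sum + m = L.sum := by
  have h := sum_take_removeStrip m L L.length
  rwa [List.take_of_length_le (length_removeStrip m L).le, List.take_length,
    List.getD_eq_default _ _ le_rfl, min_eq_left hm, min_zero, add_zero] at h

theorem sortedGE_removeStrip (m : ℕ) {L : List ℕ} (hL : L.SortedGE) :
    (removeStrip m L).SortedGE := by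
  refine List.sortedGE_iff_getElem_ge_getElem_of_le.2 fun i j hi hj hji => ?_
  rw [← List.getD_eq_getElem _ 0 hi, ← List.getD_eq_getElem _ 0 hj, getD_removeStrip,
    getD_removeStrip]
  have := hL.getD_le_getD hji
  have := hL.getD_le_getD (Nat.add_le_add_right hji 1)
  omega

theorem isHorizontalStrip_removeStrip (m : ℕ) {L : List ℕ} (hL : L.SortedGE) :
    IsHorizontalStrip (ofRowLens (removeStrip m L) (sortedGE_removeStrip m hL))
      (ofRowLens L hL) := by
  refine ⟨fun ⟨i, j⟩ hc => ?_, fun {i j} hc => ?_⟩ <;>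
    simp only [mem_ofRowLens_iff_lt_getD, getD_removeStrip] at hc ⊢ <;>
    have := hL.getD_le_getD (Nat.le_add_right i 1) <;>
    omega

section Dominance

variable {M L : List ℕ} {m : ℕ}

theorem le_getD_zero_of_sum_take_le (hM : (M ++ [m]).SortedGE)
    (hdom : ∀ t, ((M ++ [m]).take t).sum ≤ (L.take t).sum) : m ≤ L.getD 0 0 := by
  simpa [List.sum_take_add_one_getD] using
    (List.sum_take_add_le_sum_take_append hM 0).trans (hdom 1)

theorem sum_take_le_sum_take_removeStrip (hM : (M ++ [m]).SortedGE)
    (hdom : ∀ t, ((M ++ [m]).take t).sum ≤ (L.take t).sum) (t : ℕ) :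
    (M.take t).sum ≤ ((removeStrip m L).take t).sum := by
  have hm := le_getD_zero_of_sum_take_le hM hdom
  have hstrip := sum_take_removeStrip m L t
  have hprefix : (M.take t).sum ≤ ((M ++ [m]).take t).sum := by simp [List.take_append]
  have hnext := (List.sum_take_add_le_sum_take_append hM t).trans (hdom (t + 1))
  rw [List.sum_take_add_one_getD] at hnext
  have := hdom t
  omega

end Dominance

theorem exists_ssyt_content_of_dominated {M L : List ℕ} (hL : L.SortedGE) (hM : M.SortedGE)
    (hsum : M.sum = L.sum) (hdom : ∀ t, (M.take t).sum ≤ (L.take t).sum) :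
    ∃ T : SemistandardYoungTableau (ofRowLens L hL), ∀ i, T.content i = M.getD i 0 := by
  induction M using List.reverseRecOn generalizing L with
  | nil =>
    have hempty : (ofRowLens L hL).cells = ∅ :=
      Finset.card_eq_zero.1 (by rw [← YoungDiagram.card, card_ofRowLens, ← hsum, List.sum_nil])
    exact ⟨default, fun i => by simp [SemistandardYoungTableau.content, hempty]⟩
  | append_singleton M m ih =>
    have hm := le_getD_zero_of_sum_take_le hM hdom
    have hstrip := sum_removeStrip hm
    rw [List.sum_append, List.sum_singleton] at hsum
    have hM' : M.SortedGE := (hM.pairwise.sublist (List.sublist_append_left _ _)).sortedGE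
    obtain ⟨T, hT⟩ := ih (sortedGE_removeStrip m hL) hM' (by omega)
      (sum_take_le_sum_take_removeStrip hM hdom)
    refine ⟨T.extendStrip (isHorizontalStrip_removeStrip m hL) M.length
      (SemistandardYoungTableau.lt_length_of_content_eq_getD hT), fun i => ?_⟩
    rcases lt_trichotomy i M.length with hi | rfl | hi
    · rw [SemistandardYoungTableau.content_extendStrip_of_lt hi, hT, List.getD_append _ _ _ _ hi]
    · rw [SemistandardYoungTableau.content_extendStrip_self, card_ofRowLens, card_ofRowLens,
        List.getD_append_right _ _ _ _ le_rfl, Nat.sub_self, List.getD_cons_zero]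
      omega
    · rw [SemistandardYoungTableau.content_extendStrip_of_gt hi, List.getD_eq_default]
      simpa using hi

theorem Nat.Partition.sum_sort {n : ℕ} (p : n.Partition) : (p.parts.sort (· ≥ ·)).sum = n := by
  rw [← Multiset.sum_coe, Multiset.sort_eq, p.parts_sum]

theorem kostka_pos_of_dominated_general {n : ℕ}
    (lam mu : Nat.Partition n) (hdom : DominatedBy mu lam) :
    0 < Nat.card {T : SemistandardYoungTableau lam.toYoungDiagram //
      ∀ i : ℕ, (lam.toYoungDiagram.cells.filter fun c => T c.1 c.2 = i).card
        = (mu.parts.sort (· ≥ ·)).getD i 0} := by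
  obtain ⟨T, hT⟩ := exists_ssyt_content_of_dominated _ (mu.parts.pairwise_sort _).sortedGE
    (by rw [mu.sum_sort, lam.sum_sort]) hdom
  exact Nat.card_pos_iff.2
    ⟨⟨T, hT⟩, SemistandardYoungTableau.finite_content_eq_getD _ (mu.parts.sort (· ≥ ·))⟩

/-- If `mu` is dominated by `lam` (both partitions of the same positive integer `n`), then
there exists a semistandard Young tableau of shape `lam` and content `mu`: the entry `i`
(0-indexed) occurs exactly `mu_i` times, where `mu_0 ≥ mu_1 ≥ ⋯` are the parts of `mu`.
Equivalently, the Kostka number — the coefficient of the monomial symmetric function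
`m_mu` in the Schur function `s_lam` — is positive. -/
theorem kostka_pos_of_dominated {n : ℕ} (hn : 0 < n)
    (lam mu : Nat.Partition n) (hdom : DominatedBy mu lam) :
    0 < Nat.card {T : SemistandardYoungTableau lam.toYoungDiagram //
      ∀ i : ℕ, (lam.toYoungDiagram.cells.filter fun c => T c.1 c.2 = i).card
        = (mu.parts.sort (· ≥ ·)).getD i 0} :=
  kostka_pos_of_dominated_general lam mu hdom
end

section
/- Let n ≥ 1 and let T be a simple graph on 2n vertices that is a tree (connected and acyclic), and let v be a vertex of T of degree n. If the chromatic symmetric function of T is Schur positive, then every vertex x of T that is neither v nor a neighbor of v has degree 1 in T (i.e., is a leaf). -/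
/-- A proper coloring of a simple graph: adjacent vertices get different colors. -/
def IsProperColoring {V : Type*} (G : SimpleGraph V) (κ : V → ℕ) : Prop :=
  ∀ ⦃a b : V⦄, G.Adj a b → κ a ≠ κ b

/-- The number of proper colorings of `G` whose color-class sizes are given by `d`. -/
noncomputable def colorCount {V : Type*} [Fintype V] (G : SimpleGraph V) (d : ℕ →₀ ℕ) : ℕ :=
  Nat.card {κ : V → ℕ // IsProperColoring G κ ∧
    ∀ i : ℕ, (Finset.univ.filter fun v => κ v = i).card = d i}

/-- The number of semistandard Young tableaux of shape `μ` with content `d`. -/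
noncomputable def ssytCount (μ : YoungDiagram) (d : ℕ →₀ ℕ) : ℕ :=
  Nat.card {T : SemistandardYoungTableau μ //
    ∀ i : ℕ, (μ.cells.filter fun c => T c.1 c.2 = i).card = d i}

/-- The chromatic symmetric function of `G` is Schur positive. -/
def SchurPositive {V : Type*} [Fintype V] (G : SimpleGraph V) : Prop :=
  ∃ c : YoungDiagram →₀ ℕ,
    (∀ μ ∈ c.support, μ.card = Fintype.card V) ∧
    ∀ d : ℕ →₀ ℕ, colorCount G d = ∑ μ ∈ c.support, c μ * ssytCount μ d

/-!
A tree is bipartite, so it has a proper colouring with two colours. In the Schur expansion of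
`X_T`, a shape `μ` with `c_μ > 0` carries a tableau with entries in `{0, 1}`, so it has at most
two rows; every such shape with `2n` cells carries a tableau of content `(n, n)`, so `T` has a
proper colouring whose two classes both have `n` vertices. The class avoiding `v` contains the
`n` neighbours of `v`, hence equals `N(v)`. A vertex `x ∉ N(v) ∪ {v}` is then coloured like `v`,
so all its neighbours lie in `N(v)`, and two of them would close a `4`-cycle through `v`.
-/

open SimpleGraph Finset

section Content

variable {α : Type*}

def HasContent (s : Finset α) (f : α → ℕ) (d : ℕ →₀ ℕ) : Prop :=
  ∀ i, #{a ∈ s | f a = i} = d i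

variable {s : Finset α} {f : α → ℕ} {d : ℕ →₀ ℕ}

lemma HasContent.mem_support (h : HasContent s f d) {a : α} (ha : a ∈ s) : f a ∈ d.support := by
  rw [Finsupp.mem_support_iff, ← h]
  exact card_ne_zero_of_mem (mem_filter.2 ⟨ha, rfl⟩)

lemma HasContent.le_one {m k : ℕ} (h : HasContent s f (Finsupp.single 0 m + Finsupp.single 1 k))
    {a : α} (ha : a ∈ s) : f a ≤ 1 := by
  have := h.mem_support ha
  contrapose! this
  simp [this.ne', (zero_lt_one.trans this).ne']

lemma HasContent.card_filter_eq_of_balanced {n : ℕ}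
    (h : HasContent s f (Finsupp.single 0 n + Finsupp.single 1 n)) {a : α} (ha : a ∈ s) :
    #{b ∈ s | f b = f a} = n := by
  rw [h]
  rcases Nat.le_one_iff_eq_zero_or_eq_one.1 (h.le_one ha) with h0 | h1
  · simp [h0]
  · simp [h1]

lemma hasContent_of_le_one (hf : ∀ a ∈ s, f a ≤ 1) :
    HasContent s f
      (Finsupp.single 0 #{a ∈ s | f a = 0} + Finsupp.single 1 #{a ∈ s | f a = 1}) := by
  intro i
  match i with
  | 0 => simp
  | 1 => simp
  | i + 2 =>
    rw [filter_false_of_mem fun a ha => by have := hf a ha; omega]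
    simp

end Content

section Counts

variable {V : Type*} [Fintype V]

lemma colorCount_pos_iff {G : SimpleGraph V} {d : ℕ →₀ ℕ} :
    0 < colorCount G d ↔ ∃ κ, IsProperColoring G κ ∧ HasContent univ κ d := by
  have : Finite {κ : V → ℕ // IsProperColoring G κ ∧ HasContent univ κ d} :=
    Finite.of_injective (fun κ u => (⟨κ.1 u, κ.2.2.mem_support (mem_univ u)⟩ : d.support))
      fun κ κ' h => Subtype.ext <| funext fun u => congrArg Subtype.val (congrFun h u)
  change 0 < Nat.card {κ : V → ℕ // IsProperColoring G κ ∧ HasContent univ κ d} ↔ _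
  rw [Nat.card_pos_iff, and_iff_left this, nonempty_subtype]

lemma ssytCount_pos_iff {μ : YoungDiagram} {d : ℕ →₀ ℕ} :
    0 < ssytCount μ d ↔
      ∃ T : SemistandardYoungTableau μ, HasContent μ.cells (fun c => T c.1 c.2) d := by
  have : Finite {T : SemistandardYoungTableau μ // HasContent μ.cells (fun c => T c.1 c.2) d} := by
    refine Finite.of_injective (fun T (c : μ.cells) => (⟨T.1 c.1.1 c.1.2,
      T.2.mem_support c.2⟩ : d.support)) fun T T' h => Subtype.ext <| SemistandardYoungTableau.ext
        fun i j => ?_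
    by_cases hij : (i, j) ∈ μ
    · exact congrArg Subtype.val (congrFun h ⟨(i, j), (μ.mem_cells _).2 hij⟩)
    · rw [T.1.zeros hij, T'.1.zeros hij]
  change 0 < Nat.card {T : SemistandardYoungTableau μ //
    HasContent μ.cells (fun c => T c.1 c.2) d} ↔ _
  rw [Nat.card_pos_iff, and_iff_left this, nonempty_subtype]

end Counts

namespace YoungDiagram

lemma colLen_zero_le_two_of_le_one {μ : YoungDiagram} (T : SemistandardYoungTableau μ)
    (hT : ∀ c ∈ μ.cells, T c.1 c.2 ≤ 1) : μ.colLen 0 ≤ 2 := by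
  by_contra! h
  have h20 : (2, 0) ∈ μ := mem_iff_lt_colLen.2 h
  have h01 := T.col_strict zero_lt_one (μ.up_left_mem one_le_two le_rfl h20)
  have h12 := T.col_strict one_lt_two h20
  have h2 : T 2 0 ≤ 1 := hT (2, 0) ((μ.mem_cells _).2 h20)
  omega

variable {μ : YoungDiagram} (hμ : μ.colLen 0 ≤ 2)
include hμ

lemma fst_lt_two_of_colLen_zero_le_two {c : ℕ × ℕ} (hc : c ∈ μ) : c.1 < 2 :=
  (mem_iff_lt_colLen.1 (μ.up_left_mem le_rfl (Nat.zero_le c.2) hc)).trans_le hμ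

lemma card_eq_rowLen_zero_add_rowLen_one : μ.card = μ.rowLen 0 + μ.rowLen 1 := by
  have hcells : μ.cells = μ.row 0 ∪ μ.row 1 := by
    ext c
    simp only [mem_union, mem_row_iff, mem_cells]
    refine ⟨fun hc => ?_, by rintro (⟨hc, -⟩ | ⟨hc, -⟩) <;> exact hc⟩
    have := fst_lt_two_of_colLen_zero_le_two hμ hc
    by_cases h0 : c.1 = 0
    · exact .inl ⟨hc, h0⟩
    · exact .inr ⟨hc, by omega⟩
  rw [YoungDiagram.card, hcells, card_union_of_disjoint, rowLen_eq_card, rowLen_eq_card]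
  exact disjoint_left.2 fun c h0 h1 => by simp_all [mem_row_iff]

/-- The first `n` cells of row `0` carry `0`, all other cells carry `1`. -/
lemma exists_ssyt_hasContent_single_add_single {n : ℕ} (hcard : μ.card = 2 * n) :
    ∃ T : SemistandardYoungTableau μ,
      HasContent μ.cells (fun c => T c.1 c.2) (Finsupp.single 0 n + Finsupp.single 1 n) := by
  have hlen := card_eq_rowLen_zero_add_rowLen_one hμ
  have hanti := μ.rowLen_anti 0 1 zero_le_one
  let f i j : ℕ := if (i, j) ∈ μ ∧ (i ≠ 0 ∨ n ≤ j) then 1 else 0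
  let T : SemistandardYoungTableau μ :=
    { entry := f
      row_weak' {i j1 j2} hj h2 := by
        have h1 := μ.up_left_mem le_rfl hj.le h2
        simp only [f]
        split_ifs <;> grind
      col_strict' {i1 i2 j} hi h2 := by
        have := fst_lt_two_of_colLen_zero_le_two hμ h2
        have := mem_iff_lt_rowLen.1 h2
        simp only [f]
        split_ifs <;> grind
      zeros' h := if_neg fun h' => h h'.1 }
  have hT : ∀ c : ℕ × ℕ, T c.1 c.2 = f c.1 c.2 := fun _ => rfl
  have hle : ∀ c ∈ μ.cells, T c.1 c.2 ≤ 1 := fun c _ => by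
    rw [hT]
    exact ite_le_one le_rfl zero_le_one
  have h0 : #{c ∈ μ.cells | T c.1 c.2 = 0} = n := by
    have : {c ∈ μ.cells | T c.1 c.2 = 0} = {0} ×ˢ range n := by
      ext ⟨i, j⟩
      simp only [mem_filter, hT, f, mem_cells, mem_product, mem_singleton, mem_range]
      have := @mem_iff_lt_rowLen μ 0 j
      split_ifs <;> grind
    simp [this]
  have h1 : #{c ∈ μ.cells | T c.1 c.2 = 1} = n := by
    have hne : {c ∈ μ.cells | ¬T c.1 c.2 = 0} = {c ∈ μ.cells | T c.1 c.2 = 1} :=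
      filter_congr fun c hc => by have := hle c hc; omega
    have := card_filter_add_card_filter_not (s := μ.cells) fun c => T c.1 c.2 = 0
    rw [hne, h0] at this
    change _ = μ.card at this
    omega
  have := hasContent_of_le_one hle
  rw [h0, h1] at this
  exact ⟨T, this⟩

end YoungDiagram

section Graph

variable {V : Type*} [Fintype V] {G : SimpleGraph V}

omit [Fintype V] in
lemma SimpleGraph.Coloring.isProperColoring_val {k : ℕ} (C : G.Coloring (Fin k)) :
    IsProperColoring G fun u => (C u : ℕ) :=
  fun _ _ h => Fin.val_injective.ne (C.valid h)

/-- A tableau of the two-valued content `(2n - k, k)` forces a shape with at most two rows, and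
every such shape with `2n` cells also carries a tableau of content `(n, n)`. -/
lemma SchurPositive.exists_balanced_coloring (hG : SchurPositive G) (h2 : G.Colorable 2) {n : ℕ}
    (hcard : Fintype.card V = 2 * n) :
    ∃ κ, IsProperColoring G κ ∧ HasContent univ κ (Finsupp.single 0 n + Finsupp.single 1 n) := by
  classical
  obtain ⟨c, hsupp, hrep⟩ := hG
  obtain ⟨C⟩ := h2
  have hcontent := hasContent_of_le_one (s := univ) fun u _ => Nat.le_of_lt_succ (C u).isLt
  have hpos := colorCount_pos_iff.2 ⟨_, Coloring.isProperColoring_val C, hcontent⟩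
  rw [hrep, sum_pos_iff] at hpos
  obtain ⟨μ, hμ, hpos⟩ := hpos
  obtain ⟨T, hT⟩ := ssytCount_pos_iff.1 (pos_of_mul_pos_right hpos (Nat.zero_le _))
  have hrows := YoungDiagram.colLen_zero_le_two_of_le_one T fun c hc => hT.le_one hc
  obtain ⟨T', hT'⟩ :=
    YoungDiagram.exists_ssyt_hasContent_single_add_single hrows ((hsupp μ hμ).trans hcard)
  rw [← colorCount_pos_iff, hrep]
  exact sum_pos_iff.2 ⟨μ, hμ, Nat.mul_pos (Finsupp.mem_support_iff.1 hμ).bot_lt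
    (ssytCount_pos_iff.2 ⟨T', hT'⟩)⟩

variable [DecidableRel G.Adj]

lemma IsProperColoring.neighborFinset_eq {κ : V → ℕ} (hκ : IsProperColoring G κ) {v : V}
    (hdeg : G.degree v = #{u | κ u ≠ κ v}) :
    G.neighborFinset v = ({u | κ u ≠ κ v} : Finset V) :=
  eq_of_subset_of_card_le
    (fun w hw => mem_filter.2 ⟨mem_univ w, (hκ ((mem_neighborFinset G v w).1 hw)).symm⟩)
    (by rw [card_neighborFinset_eq_degree, hdeg])

lemma SimpleGraph.IsAcyclic.degree_le_one_of_forall_adj (hG : G.IsAcyclic) {x v : V}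
    (hxv : x ≠ v) (h : ∀ w, G.Adj x w → G.Adj v w) : G.degree x ≤ 1 := by
  have hpath : ∀ w (hw : G.Adj x w), (Walk.cons hw (Walk.cons (h w hw).symm Walk.nil)).IsPath :=
    fun w hw => by simp [hw.ne, hxv, (h w hw).ne']
  rw [← card_neighborFinset_eq_degree, card_le_one]
  intro a ha b hb
  rw [mem_neighborFinset] at ha hb
  simpa using congrArg (fun p : G.Path x v => p.1.getVert 1)
    ((hG.subsingleton_path x v).elim ⟨_, hpath a ha⟩ ⟨_, hpath b hb⟩)

end Graph

theorem leaf_of_schurPositive_general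
    {V : Type*} [Fintype V]
    {n : ℕ}
    (T : SimpleGraph V) [DecidableRel T.Adj]
    (hcard : Fintype.card V = 2 * n) (htree : T.IsTree)
    (v : V) (hdeg : T.degree v = n)
    (hpos : SchurPositive T) :
    ∀ x : V, x ≠ v → ¬ T.Adj v x → T.degree x = 1 := by
  intro x hxv hvx
  obtain ⟨κ, hκ, hcontent⟩ := hpos.exists_balanced_coloring htree.colorable_two hcard
  have hclass : #{u | κ u ≠ κ v} = n := by
    have := card_filter_add_card_filter_not (s := univ) fun u => κ u = κ v
    rw [hcontent.card_filter_eq_of_balanced (mem_univ v), card_univ, hcard] at this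
    exact Nat.add_left_cancel (this.trans (two_mul n))
  have hN := hκ.neighborFinset_eq (hdeg.trans hclass.symm)
  have hx : κ x = κ v := by
    by_contra h
    exact hvx ((mem_neighborFinset T v x).1 (hN ▸ mem_filter.2 ⟨mem_univ x, h⟩))
  have hnbr : ∀ w, T.Adj x w → T.Adj v w := fun w hw =>
    (mem_neighborFinset T v w).1 (hN ▸ mem_filter.2 ⟨mem_univ w, hx ▸ (hκ hw).symm⟩)
  exact le_antisymm (htree.isAcyclic.degree_le_one_of_forall_adj hxv hnbr)
    ((htree.connected x v).degree_pos_left hxv)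

theorem leaf_of_schurPositive
    {V : Type*} [Fintype V] [DecidableEq V]
    {n : ℕ} (hn : 1 ≤ n)
    (T : SimpleGraph V) [DecidableRel T.Adj]
    (hcard : Fintype.card V = 2 * n) (htree : T.IsTree)
    (v : V) (hdeg : T.degree v = n)
    (hpos : SchurPositive T) :
    ∀ x : V, x ≠ v → ¬ T.Adj v x → T.degree x = 1 :=
  leaf_of_schurPositive_general T hcard htree v hdeg hpos
end

section
/- Let n ≥ 1 and let T be a simple graph on 2n vertices that is a tree (connected and acyclic), and let v be a vertex of T of degree n. Suppose the vertex set of T can be partitioned into two independent sets A and B with |A| = |B| = n. Then every vertex x of T that is neither v nor a neighbor of v has degree 1 in T (i.e., is a leaf). -/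
/-!
Say `v ∈ A`. Its `n` neighbours lie in `B`, which has only `n` vertices, so they are all of `B`,
and the vertices other than `v` that are not adjacent to `v` are exactly those of `A \ {v}`.
Each edge of a bipartite graph has exactly one end in `A`, so the degrees over `A` add up to the
number of edges, which for a tree is `|A| + |B| - 1`. Taking away the degree `|B|` of `v` leaves
`|A| - 1` for the `|A| - 1` vertices of `A \ {v}`, each of degree at least one since a tree is
connected: all of them are leaves.
-/

open Finset

namespace SimpleGraph

variable {V : Type*} {G : SimpleGraph V}

theorem isBipartiteWith_of_union_eq_univ [Fintype V] [DecidableEq V] {s t : Finset V}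
    (hst : s ∪ t = univ) (hdisj : Disjoint s t)
    (hs : ∀ a ∈ s, ∀ b ∈ s, ¬ G.Adj a b) (ht : ∀ a ∈ t, ∀ b ∈ t, ¬ G.Adj a b) :
    G.IsBipartiteWith s t where
  disjoint := disjoint_coe.mpr hdisj
  mem_of_adj a b hab := by
    have hmem : ∀ x, x ∈ s ∨ x ∈ t := fun x => mem_union.mp (hst ▸ mem_univ x)
    rcases hmem a with ha | ha <;> rcases hmem b with hb | hb
    exacts [(hs a ha b hb hab).elim, .inl ⟨ha, hb⟩, .inr ⟨ha, hb⟩, (ht a ha b hb hab).elim]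

theorem IsBipartiteWith.neighborFinset_eq_of_degree_eq_card {s t : Finset V} {v : V}
    [Fintype (G.neighborSet v)] (h : G.IsBipartiteWith s t) (hv : v ∈ s)
    (hdeg : G.degree v = #t) :
    G.neighborFinset v = t :=
  eq_of_subset_of_card_le (isBipartiteWith_neighborFinset_subset h hv)
    (by rw [card_neighborFinset_eq_degree, hdeg])

theorem IsTree.degree_eq_one_of_degree_eq_card [Fintype V] [DecidableEq V] [DecidableRel G.Adj]
    {s t : Finset V} (hG : G.IsTree) (h : G.IsBipartiteWith s t) (hst : s ∪ t = univ)
    {v x : V} (hv : v ∈ s) (hdeg : G.degree v = #t) (hxv : x ≠ v) (hvx : ¬ G.Adj v x) :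
    G.degree x = 1 := by
  have hx : x ∈ s.erase v := by
    refine mem_erase.mpr
      ⟨hxv, (mem_union.mp (hst ▸ mem_univ x)).resolve_right fun hxt => hvx ?_⟩
    rwa [← mem_neighborFinset, h.neighborFinset_eq_of_degree_eq_card hv hdeg]
  have : Nontrivial V := ⟨⟨x, v, hxv⟩⟩
  have hpos : ∀ a ∈ s.erase v, 1 ≤ G.degree a :=
    fun a _ => hG.connected.preconnected.degree_pos_of_nontrivial a
  have hsum : ∑ a ∈ s.erase v, 1 = ∑ a ∈ s.erase v, G.degree a := by
    have hedges := hG.card_edgeFinset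
    rw [← card_univ, ← hst, card_union_of_disjoint (disjoint_coe.mp h.disjoint),
      ← isBipartiteWith_sum_degrees_eq_card_edges h, ← add_sum_erase s _ hv, hdeg] at hedges
    rw [← card_eq_sum_ones, card_erase_of_mem hv]
    omega
  exact ((sum_eq_sum_iff_of_le hpos).mp hsum x hx).symm

end SimpleGraph

theorem leaf_of_balanced_bipartition_general
    {V : Type*} [Fintype V] [DecidableEq V]
    {n : ℕ}
    (T : SimpleGraph V) [DecidableRel T.Adj]
    (htree : T.IsTree)
    (v : V) (hdeg : T.degree v = n)
    (A B : Finset V)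
    (hunion : A ∪ B = Finset.univ) (hdisj : Disjoint A B)
    (hA : ∀ a ∈ A, ∀ b ∈ A, ¬ T.Adj a b)
    (hB : ∀ a ∈ B, ∀ b ∈ B, ¬ T.Adj a b)
    (hAcard : A.card = n) (hBcard : B.card = n) :
    ∀ x : V, x ≠ v → ¬ T.Adj v x → T.degree x = 1 := by
  intro x hxv hvx
  have hbip : T.IsBipartiteWith A B :=
    SimpleGraph.isBipartiteWith_of_union_eq_univ hunion hdisj hA hB
  rcases mem_union.mp (hunion ▸ mem_univ v) with hvA | hvB
  · exact htree.degree_eq_one_of_degree_eq_card hbip hunion hvA (hdeg.trans hBcard.symm) hxv hvx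
  · exact htree.degree_eq_one_of_degree_eq_card hbip.symm (union_comm A B ▸ hunion) hvB
      (hdeg.trans hAcard.symm) hxv hvx

theorem leaf_of_balanced_bipartition
    {V : Type*} [Fintype V] [DecidableEq V]
    {n : ℕ} (hn : 1 ≤ n)
    (T : SimpleGraph V) [DecidableRel T.Adj]
    (hcard : Fintype.card V = 2 * n) (htree : T.IsTree)
    (v : V) (hdeg : T.degree v = n)
    (A B : Finset V)
    (hunion : A ∪ B = Finset.univ) (hdisj : Disjoint A B)
    (hA : ∀ a ∈ A, ∀ b ∈ A, ¬ T.Adj a b)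
    (hB : ∀ a ∈ B, ∀ b ∈ B, ¬ T.Adj a b)
    (hAcard : A.card = n) (hBcard : B.card = n) :
    ∀ x : V, x ≠ v → ¬ T.Adj v x → T.degree x = 1 :=
  leaf_of_balanced_bipartition_general T htree v hdeg A B hunion hdisj hA hB hAcard hBcard
end

section
/- Let n ≥ 1 and let T be a simple graph on 2n vertices that is a tree (connected and acyclic) with a vertex v of degree n such that every vertex of T other than v and the neighbors of v has degree 1 (so T is one of the trees T(ν) for a partition ν of n−1). Then the set N(v) of neighbors of v and its complement {v} ∪ (V(T) \ ({v} ∪ N(v))) form a partition of the vertex set of T into two independent sets, each of cardinality n; that is, T admits a stable partition of type (n, n). -/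
/-!
A tree has no triangles, so `N(v)` is independent. Two vertices outside `N(v)` other than `v`
are leaves, and two adjacent leaves would form a whole connected component, which would miss `v`.
The sizes follow from `deg v = n` and `|V| = 2n`.
-/

namespace SimpleGraph

variable {V : Type*} {G : SimpleGraph V}

theorem Reachable.mem_of_forall_adj_mem {S : Set V} (hS : ∀ ⦃x y⦄, G.Adj x y → x ∈ S → y ∈ S)
    {u w : V} (h : G.Reachable u w) (hu : u ∈ S) : w ∈ S := by
  obtain ⟨p⟩ := h
  induction p with
  | nil => exact hu
  | cons hadj _ ih => exact ih (hS hadj hu)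

theorem Connected.eq_or_eq_of_adj_of_degree_eq_one (hG : G.Connected) {a b : V}
    [Fintype (G.neighborSet a)] [Fintype (G.neighborSet b)] (hab : G.Adj a b)
    (ha : G.degree a = 1) (hb : G.degree b = 1) (x : V) : x = a ∨ x = b := by
  obtain ⟨_, -, ha_unique⟩ := degree_eq_one_iff_existsUnique_adj.mp ha
  obtain ⟨_, -, hb_unique⟩ := degree_eq_one_iff_existsUnique_adj.mp hb
  have hclosed : ∀ ⦃y z⦄, G.Adj y z → y ∈ ({a, b} : Set V) → z ∈ ({a, b} : Set V) := by
    rintro y z hyz (rfl | rfl)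
    · exact .inr ((ha_unique z hyz).trans (ha_unique b hab).symm)
    · exact .inl ((hb_unique z hyz).trans (hb_unique a hab.symm).symm)
  exact (hG a x).mem_of_forall_adj_mem hclosed (.inl rfl)

end SimpleGraph

open SimpleGraph in
theorem broom_stable_partition_general
    {V : Type*} [Fintype V] [DecidableEq V]
    {n : ℕ}
    (T : SimpleGraph V) [DecidableRel T.Adj]
    (hcard : Fintype.card V = 2 * n) (htree : T.IsTree)
    (v : V) (hdeg : T.degree v = n)
    (hleaf : ∀ x : V, x ≠ v → ¬ T.Adj v x → T.degree x = 1) :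
    (T.neighborFinset v)ᶜ = insert v (Finset.univ \ insert v (T.neighborFinset v)) ∧
    (∀ a ∈ T.neighborFinset v, ∀ b ∈ T.neighborFinset v, ¬ T.Adj a b) ∧
    (∀ a ∈ (T.neighborFinset v)ᶜ, ∀ b ∈ (T.neighborFinset v)ᶜ, ¬ T.Adj a b) ∧
    (T.neighborFinset v).card = n ∧ ((T.neighborFinset v)ᶜ).card = n := by
  refine ⟨?_, ?_, ?_, hdeg, ?_⟩
  · ext x
    by_cases hx : x = v <;> simp [hx]
  · intro a ha b hb hab
    rw [mem_neighborFinset] at ha hb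
    exact isIndepSet_neighborSet_of_triangleFree _ (htree.isAcyclic.cliqueFree le_rfl) v
      ha hb hab.ne hab
  · intro a ha b hb hab
    rw [Finset.mem_compl, mem_neighborFinset] at ha hb
    have hav : a ≠ v := by rintro rfl; exact hb hab
    have hbv : b ≠ v := by rintro rfl; exact ha hab.symm
    rcases htree.connected.eq_or_eq_of_adj_of_degree_eq_one hab (hleaf a hav ha)
      (hleaf b hbv hb) v with h | h
    · exact hav h.symm
    · exact hbv h.symm
  · rw [Finset.card_compl, card_neighborFinset_eq_degree, hdeg, hcard]
    omega

/-- In a broom tree `T(ν)` on `2n` vertices — a tree with a vertex `v` of degree `n` all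
of whose non-neighbors (other than `v` itself) are leaves — the neighborhood `N(v)` and
its complement `{v} ∪ (V \ ({v} ∪ N(v)))` form a stable partition of type `(n, n)`:
two independent sets, each of cardinality `n`. -/
theorem broom_stable_partition
    {V : Type*} [Fintype V] [DecidableEq V]
    {n : ℕ} (hn : 1 ≤ n)
    (T : SimpleGraph V) [DecidableRel T.Adj]
    (hcard : Fintype.card V = 2 * n) (htree : T.IsTree)
    (v : V) (hdeg : T.degree v = n)
    (hleaf : ∀ x : V, x ≠ v → ¬ T.Adj v x → T.degree x = 1) :
    (T.neighborFinset v)ᶜ = insert v (Finset.univ \ insert v (T.neighborFinset v)) ∧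
    (∀ a ∈ T.neighborFinset v, ∀ b ∈ T.neighborFinset v, ¬ T.Adj a b) ∧
    (∀ a ∈ (T.neighborFinset v)ᶜ, ∀ b ∈ (T.neighborFinset v)ᶜ, ¬ T.Adj a b) ∧
    (T.neighborFinset v).card = n ∧ ((T.neighborFinset v)ᶜ).card = n :=
  broom_stable_partition_general T hcard htree v hdeg hleaf
end
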